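/- arXiv:1905.03038 — 8 statements merged into one kernel-verified Lean document; each statement's English description precedes it below -/
import Mathlib

section
/- Let V be a finite set of goods, u : V → ℝ≥0 an additive utility function, and n ≥ 2 agents, where at most one agent has a utility function different from u. Then on any connected graph G with vertex set V there exists an allocation of the goods into n connected bundles such that every agent receives a bundle whose value (under her own utility) is at least her maximin share mms^(n)(G, ·). -/
open scoped BigOperators

noncomputable section

/-- Total value of a bundle under an additive utility. -/
def bval {V : Type*} [DecidableEq V] (u : V → ℝ) (S : Finset V) : ℝ := ∑ v ∈ S, u v

/-- A `G`-bundle: a (possibly empty) set of vertices inducing a connected subgraph. -/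
def IsBundle {V : Type*} (G : SimpleGraph V) (S : Finset V) : Prop :=
  (S : Set V) = ∅ ∨ (G.induce (S : Set V)).Connected

/-- A split of the vertex set `A` into `n` pairwise disjoint `G`-bundles covering `A`. -/
def IsSplitOn {V : Type*} [DecidableEq V] (G : SimpleGraph V) (A : Finset V) (n : ℕ)
    (P : Fin n → Finset V) : Prop :=
  (∀ i, IsBundle G (P i)) ∧ (∀ i j, i ≠ j → Disjoint (P i) (P j)) ∧
  (∀ i, P i ⊆ A) ∧ (∀ v ∈ A, ∃ i, v ∈ P i)

/-- The maximin share over splits of `A` into `n` `G`-bundles. -/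
def mmsOn {V : Type*} [DecidableEq V] (G : SimpleGraph V) (A : Finset V)
    (n : ℕ) (u : V → ℝ) : ℝ :=
  sSup {q : ℝ | ∃ P : Fin n → Finset V, IsSplitOn G A n P ∧ ∀ i, q ≤ bval u (P i)}

/-- The maximin share `mms^(n)(G,u)`. -/
def mms {V : Type*} [DecidableEq V] [Fintype V] (G : SimpleGraph V)
    (n : ℕ) (u : V → ℝ) : ℝ := mmsOn G Finset.univ n u

/-- The cycle on `m` vertices, identified with `ZMod m`. -/
def cycleGraph (m : ℕ) : SimpleGraph (ZMod m) :=
  SimpleGraph.fromRel (fun v w => w = v + 1)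

end

section aux

set_option linter.unusedSectionVars false

variable {V : Type*} [DecidableEq V] [Fintype V] {G : SimpleGraph V} {n : ℕ}

lemma bval_nonneg {u : V → ℝ} (hu : ∀ v, 0 ≤ u v) (S : Finset V) : 0 ≤ bval u S :=
  Finset.sum_nonneg fun v _ => hu v

lemma sum_split {P : Fin n → Finset V} (hP : IsSplitOn G Finset.univ n P) (u : V → ℝ) :
    ∑ i, bval u (P i) = bval u Finset.univ := by
  obtain ⟨-, hdisj, -, hcov⟩ := hP
  have hU : (Finset.univ : Finset V) = Finset.univ.biUnion P := by
    ext v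
    simp only [Finset.mem_biUnion, Finset.mem_univ, true_iff, true_and]
    exact hcov v (Finset.mem_univ v)
  unfold bval
  rw [hU, Finset.sum_biUnion]
  intro i _ k _ hik
  exact hdisj i k hik

lemma exists_trivial_split (hG : G.Connected) (hn : 0 < n) :
    IsSplitOn G Finset.univ n (fun i => if i = ⟨0, hn⟩ then Finset.univ else ∅) := by
  refine ⟨?_, ?_, ?_, ?_⟩
  · intro i
    show IsBundle G (if i = ⟨0, hn⟩ then Finset.univ else ∅)
    by_cases h : i = ⟨0, hn⟩
    · rw [if_pos h]
      right
      rw [Finset.coe_univ]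
      exact (SimpleGraph.induceUnivIso G).connected_iff.mpr hG
    · rw [if_neg h]
      left
      simp
  · intro i k hik
    by_cases h : i = ⟨0, hn⟩
    · have : k ≠ ⟨0, hn⟩ := fun hk => hik (h.trans hk.symm)
      simp [h, this]
    · simp [h]
  · intro i
    by_cases h : i = ⟨0, hn⟩ <;> simp [h]
  · intro v _
    exact ⟨⟨0, hn⟩, by simp⟩

lemma exists_opt (hG : G.Connected) (hn : 0 < n) (u : V → ℝ) (hu : ∀ v, 0 ≤ u v) :
    ∃ P : Fin n → Finset V, IsSplitOn G Finset.univ n P ∧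
      ∀ i, mms G n u ≤ bval u (P i) := by
  classical
  haveI : Nonempty (Fin n) := ⟨⟨0, hn⟩⟩
  set PS : Finset (Fin n → Finset V) :=
    Finset.univ.filter (fun P => IsSplitOn G Finset.univ n P) with hPS
  have hne : PS.Nonempty :=
    ⟨fun i => if i = ⟨0, hn⟩ then Finset.univ else ∅,
      by simp [hPS, exists_trivial_split hG hn]⟩
  set g : (Fin n → Finset V) → ℝ :=
    fun P => Finset.univ.inf' Finset.univ_nonempty (fun i => bval u (P i)) with hg
  obtain ⟨Pstar, hPstar, hmax⟩ := Finset.exists_max_image PS g hne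
  have hPstar' : IsSplitOn G Finset.univ n Pstar := by
    simpa [hPS] using hPstar
  have hgnonneg : 0 ≤ g Pstar :=
    Finset.le_inf' _ _ (fun i _ => bval_nonneg hu _)
  have hmms : mms G n u ≤ g Pstar := by
    apply Real.sSup_le _ hgnonneg
    rintro q ⟨Q, hQ, hq⟩
    have hQmem : Q ∈ PS := by simp [hPS, hQ]
    calc q ≤ g Q := Finset.le_inf' _ _ (fun i _ => hq i)
    _ ≤ g Pstar := hmax Q hQmem
  exact ⟨Pstar, hPstar', fun i =>
    hmms.trans (Finset.inf'_le _ (Finset.mem_univ i))⟩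

lemma exists_fav (hn : 0 < n) {P : Fin n → Finset V}
    (hP : IsSplitOn G Finset.univ n P) (u : V → ℝ) (hu : ∀ v, 0 ≤ u v) :
    ∃ k : Fin n, mms G n u ≤ bval u (P k) := by
  haveI : Nonempty (Fin n) := ⟨⟨0, hn⟩⟩
  obtain ⟨k, -, hk⟩ :=
    Finset.exists_max_image Finset.univ (fun i => bval u (P i)) Finset.univ_nonempty
  refine ⟨k, ?_⟩
  apply Real.sSup_le _ (bval_nonneg hu _)
  rintro q ⟨Q, hQ, hq⟩
  have h1 : (n : ℝ) * q ≤ bval u Finset.univ := by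
    rw [← sum_split hQ u]
    calc (n : ℝ) * q = ∑ _i : Fin n, q := by simp [mul_comm]
    _ ≤ ∑ i, bval u (Q i) := Finset.sum_le_sum (fun i _ => hq i)
  have h2 : bval u Finset.univ ≤ (n : ℝ) * bval u (P k) := by
    rw [← sum_split hP u]
    calc ∑ i, bval u (P i) ≤ ∑ _i : Fin n, bval u (P k) :=
          Finset.sum_le_sum (fun i _ => hk i (Finset.mem_univ i))
    _ = (n : ℝ) * bval u (P k) := by simp [mul_comm]
  exact le_of_mul_le_mul_left (a := (n : ℝ)) (by linarith) (by exact_mod_cast hn)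

end aux

/-- if at most one of `n ≥ 2` agents has a utility different from `u`,
an mms-allocation exists on any connected graph. -/
theorem stmt0 {V : Type*} [DecidableEq V] [Fintype V] (G : SimpleGraph V)
    (hG : G.Connected) (n : ℕ) (hn : 2 ≤ n)
    (u : V → ℝ) (hu : ∀ v, 0 ≤ u v)
    (us : Fin n → V → ℝ) (hus : ∀ i v, 0 ≤ us i v)
    (j : Fin n) (hj : ∀ i, i ≠ j → us i = u) :
    ∃ P : Fin n → Finset V, IsSplitOn G Finset.univ n P ∧
      ∀ i, mms G n (us i) ≤ bval (us i) (P i) := by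
  have hn0 : 0 < n := lt_of_lt_of_le two_pos hn
  obtain ⟨P, hP, hPopt⟩ := exists_opt hG hn0 u hu
  obtain ⟨k, hk⟩ := exists_fav hn0 hP (us j) (hus j)
  refine ⟨fun i => P (Equiv.swap j k i), ⟨?_, ?_, ?_, ?_⟩, ?_⟩
  · exact fun i => hP.1 _
  · intro i i' h
    exact hP.2.1 _ _ ((Equiv.swap j k).injective.ne h)
  · exact fun i => hP.2.2.1 _
  · intro v hv
    obtain ⟨i0, hi0⟩ := hP.2.2.2 v hv
    exact ⟨Equiv.swap j k i0, by simpa using hi0⟩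
  · intro i
    by_cases h : i = j
    · subst h
      simpa using hk
    · rw [hj i h]
      exact hPopt (Equiv.swap j k i)
end

section
/- For any connected graph G of goods and any two agents with additive nonnegative utility functions u_1, u_2, there is a partition of V(G) into two G-bundles P_1, P_2 with u_1(P_1) ≥ mms^(2)(G,u_1) and u_2(P_2) ≥ mms^(2)(G,u_2). -/
open scoped BigOperators

/-- mms-allocations to two agents always exist on a connected graph. -/
theorem stmt1 {V : Type*} [DecidableEq V] [Fintype V] (G : SimpleGraph V)
    (hG : G.Connected) (u1 u2 : V → ℝ)
    (h1 : ∀ v, 0 ≤ u1 v) (h2 : ∀ v, 0 ≤ u2 v) :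
    ∃ P : Fin 2 → Finset V, IsSplitOn G Finset.univ 2 P ∧
      mms G 2 u1 ≤ bval u1 (P 0) ∧ mms G 2 u2 ≤ bval u2 (P 1) := by
  classical
  -- the trivial split
  have htriv : IsSplitOn G Finset.univ 2 ![Finset.univ, ∅] := by
    refine ⟨?_, ?_, ?_, ?_⟩
    · intro i
      have hi : ![Finset.univ, (∅ : Finset V)] i = Finset.univ ∨
          ![Finset.univ, (∅ : Finset V)] i = ∅ := by
        fin_cases i <;> simp
      rcases hi with h | h <;> rw [h]
      · right
        rw [Finset.coe_univ]
        exact (SimpleGraph.Iso.connected_iff (SimpleGraph.induceUnivIso G)).mpr hG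
      · left; simp
    · intro i j hij
      fin_cases i <;> fin_cases j <;> simp_all
    · intro i; exact Finset.subset_univ _
    · intro v _; exact ⟨0, by simp⟩
  -- sum over a split equals total
  have hsum : ∀ (u : V → ℝ) (Q : Fin 2 → Finset V), IsSplitOn G Finset.univ 2 Q →
      bval u (Q 0) + bval u (Q 1) = bval u Finset.univ := by
    rintro u Q ⟨_, hd, _, hc⟩
    have hU : Q 0 ∪ Q 1 = Finset.univ := by
      apply Finset.eq_univ_iff_forall.mpr
      intro v
      obtain ⟨i, hi⟩ := hc v (Finset.mem_univ v)
      fin_cases i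
      · exact Finset.mem_union_left _ hi
      · exact Finset.mem_union_right _ hi
    rw [show bval u Finset.univ = bval u (Q 0 ∪ Q 1) from by rw [hU]]
    exact (Finset.sum_union (hd 0 1 (by decide))).symm
  -- choose a split maximizing agent 1's min value
  set F : Finset (Fin 2 → Finset V) :=
    Finset.univ.filter (fun P => IsSplitOn G Finset.univ 2 P) with hF
  have hFne : F.Nonempty := ⟨![Finset.univ, ∅], Finset.mem_filter.mpr ⟨Finset.mem_univ _, htriv⟩⟩
  obtain ⟨P, hPF, hPmax⟩ := Finset.exists_max_image F
    (fun P => min (bval u1 (P 0)) (bval u1 (P 1))) hFne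
  have hPsplit : IsSplitOn G Finset.univ 2 P := by
    simpa [hF] using hPF
  -- mms for agent 1 is at most min over P
  have hmms1 : mms G 2 u1 ≤ min (bval u1 (P 0)) (bval u1 (P 1)) := by
    apply csSup_le
    · exact ⟨min (bval u1 (P 0)) (bval u1 (P 1)), P, hPsplit, fun i => by
        fin_cases i
        · exact min_le_left _ _
        · exact min_le_right _ _⟩
    · rintro q ⟨Q, hQ, hq⟩
      have hQF : Q ∈ F := by simp [hF, hQ]
      calc q ≤ min (bval u1 (Q 0)) (bval u1 (Q 1)) := le_min (hq 0) (hq 1)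
        _ ≤ _ := hPmax Q hQF
  -- mms for agent 2 is at most half the total
  have hmms2 : mms G 2 u2 ≤ bval u2 Finset.univ / 2 := by
    apply csSup_le
    · exact ⟨min (bval u2 Finset.univ) (bval u2 (∅ : Finset V)), ![Finset.univ, ∅], htriv,
        fun i => by
          fin_cases i
          · exact (min_le_left _ _).trans (le_of_eq rfl)
          · exact (min_le_right _ _).trans (le_of_eq rfl)⟩
    · rintro q ⟨Q, hQ, hq⟩
      have := hsum u2 Q hQ
      have h0 := hq 0
      have h1' := hq 1
      linarith
  have hhalf : bval u2 Finset.univ / 2 ≤ max (bval u2 (P 0)) (bval u2 (P 1)) := by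
    have := hsum u2 P hPsplit
    have := le_max_left (bval u2 (P 0)) (bval u2 (P 1))
    have := le_max_right (bval u2 (P 0)) (bval u2 (P 1))
    linarith
  by_cases hcmp : bval u2 (P 0) ≤ bval u2 (P 1)
  · refine ⟨P, hPsplit, (hmms1.trans (min_le_left _ _)), ?_⟩
    calc mms G 2 u2 ≤ _ := hmms2
      _ ≤ max (bval u2 (P 0)) (bval u2 (P 1)) := hhalf
      _ = bval u2 (P 1) := max_eq_right hcmp
  · refine ⟨![P 1, P 0], ?_, ?_, ?_⟩
    · obtain ⟨hb, hd, hs, hc⟩ := hPsplit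
      refine ⟨?_, ?_, ?_, ?_⟩
      · intro i; fin_cases i
        · exact hb 1
        · exact hb 0
      · intro i j hij; fin_cases i <;> fin_cases j
        · simp at hij
        · exact hd 1 0 (by decide)
        · exact hd 0 1 (by decide)
        · simp at hij
      · intro i; fin_cases i
        · exact hs 1
        · exact hs 0
      · intro v hv
        obtain ⟨i, hi⟩ := hc v hv
        fin_cases i
        · exact ⟨1, hi⟩
        · exact ⟨0, hi⟩
    · exact hmms1.trans (min_le_right _ _)
    · calc mms G 2 u2 ≤ _ := hmms2
        _ ≤ max (bval u2 (P 0)) (bval u2 (P 1)) := hhalf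
        _ = bval u2 (P 0) := max_eq_left (le_of_not_ge hcmp)
end

section
/- Let G be a connected graph of goods and c > 0 a real number. If for every n-regular collection of n agents a c-sufficient allocation exists on G, then for every collection of n agents with arbitrary nonnegative additive utility functions a c-sufficient allocation exists on G. -/
open scoped BigOperators

/-!
A nonnegative utility `u` with maximin share `μ > 0` dominates `μ • w` for an `n`-regular `w`:
rescale `u` on each bundle of a maximin split so that every bundle is worth exactly `1`.
An allocation that is `c`-sufficient for the rescaled agents is then `c`-sufficient for the
original ones, while agents with `μ ≤ 0` are satisfied by any bundle.
-/

section Splits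

variable {V : Type*} [DecidableEq V] {G : SimpleGraph V} {A : Finset V} {n : ℕ}
  {P : Fin n → Finset V} {u : V → ℝ} {q : ℝ}

theorem IsSplitOn.sum_bval (hP : IsSplitOn G A n P) (u : V → ℝ) :
    ∑ i, bval u (P i) = bval u A := by
  have hA : Finset.univ.biUnion P = A := by
    ext v
    simp only [Finset.mem_biUnion, Finset.mem_univ, true_and]
    exact ⟨fun ⟨i, hv⟩ => hP.2.2.1 i hv, hP.2.2.2 v⟩
  rw [bval, ← hA, Finset.sum_biUnion fun i _ j _ hij => hP.2.1 i j hij]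
  rfl

theorem IsSplitOn.card_mul_le_bval (hP : IsSplitOn G A n P) (hq : ∀ i, q ≤ bval u (P i)) :
    n * q ≤ bval u A := by
  simpa [← hP.sum_bval u] using Finset.card_nsmul_le_sum Finset.univ _ q fun i _ => hq i

theorem bddAbove_mmsOn_set (hn : 0 < n) :
    BddAbove {q : ℝ | ∃ P : Fin n → Finset V, IsSplitOn G A n P ∧ ∀ i, q ≤ bval u (P i)} := by
  refine ⟨bval u A / n, fun q ⟨P, hP, hq⟩ => ?_⟩
  rw [le_div_iff₀ (by exact_mod_cast hn), mul_comm]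
  exact hP.card_mul_le_bval hq

theorem le_mmsOn (hn : 0 < n) (hP : IsSplitOn G A n P) (hq : ∀ i, q ≤ bval u (P i)) :
    q ≤ mmsOn G A n u :=
  le_csSup (bddAbove_mmsOn_set hn) ⟨P, hP, hq⟩

theorem exists_isSplitOn_forall_mmsOn_le [Finite V] (hn : 0 < n) (hA : ∃ P, IsSplitOn G A n P) :
    ∃ P, IsSplitOn G A n P ∧ ∀ i, mmsOn G A n u ≤ bval u (P i) := by
  set S := {q : ℝ | ∃ P : Fin n → Finset V, IsSplitOn G A n P ∧ ∀ i, q ≤ bval u (P i)}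
  have hS : S = ⋃ P ∈ {P | IsSplitOn G A n P}, ⋂ i, Set.Iic (bval u (P i)) := by
    ext q
    simp [S]
  have hclosed : IsClosed S := by
    rw [hS]
    exact (Set.toFinite _).isClosed_biUnion fun P _ => isClosed_iInter fun i => isClosed_Iic
  obtain ⟨P, hP⟩ := hA
  have hne : S.Nonempty :=
    ⟨Finset.univ.inf' ⟨⟨0, hn⟩, Finset.mem_univ _⟩ fun i => bval u (P i),
      P, hP, fun i => Finset.inf'_le _ (Finset.mem_univ i)⟩
  exact hclosed.csSup_mem hne (bddAbove_mmsOn_set hn)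

theorem mmsOn_eq_of_forall_bval_eq (hn : 0 < n) (hP : IsSplitOn G A n P)
    (hq : ∀ i, bval u (P i) = q) : mmsOn G A n u = q := by
  refine le_antisymm (csSup_le ⟨q, P, hP, fun i => (hq i).ge⟩ ?_) (le_mmsOn hn hP fun i => (hq i).ge)
  rintro q' ⟨Q, hQ, hq'⟩
  have hn' : (0 : ℝ) < n := by exact_mod_cast hn
  have h := hQ.card_mul_le_bval hq'
  rw [← hP.sum_bval u, Finset.sum_congr rfl fun i _ => hq i] at h
  simp only [Finset.sum_const, Finset.card_univ, Fintype.card_fin, nsmul_eq_mul] at h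
  exact le_of_mul_le_mul_left h hn'

end Splits

theorem SimpleGraph.Connected.exists_isSplitOn_univ {V : Type*} [DecidableEq V] [Fintype V]
    {G : SimpleGraph V} (hG : G.Connected) {n : ℕ} (hn : 0 < n) :
    ∃ P, IsSplitOn G Finset.univ n P := by
  let i₀ : Fin n := ⟨0, hn⟩
  refine ⟨fun i => if i = i₀ then Finset.univ else ∅, fun i => ?_, fun i j hij => ?_,
    fun i => Finset.subset_univ _, fun v _ => ⟨i₀, by simp⟩⟩
  · by_cases hi : i = i₀
    · dsimp only
      rw [if_pos hi, IsBundle, Finset.coe_univ]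
      exact .inr ((SimpleGraph.induceUnivIso G).connected_iff.mpr hG)
    · simp [IsBundle, hi]
  · by_cases hi : i = i₀
    · simp [hi, Ne.symm (hi ▸ hij)]
    · simp [hi]

theorem exists_nonneg_forall_bval_eq_one_of_pairwise_disjoint {V ι : Type*} [DecidableEq V]
    {Q : ι → Finset V} (hQ : Pairwise (Function.onFun Disjoint Q)) {u : V → ℝ} (hu : ∀ v, 0 ≤ u v) {q : ℝ}
    (hq : 0 < q) (hle : ∀ i, q ≤ bval u (Q i)) :
    ∃ w : V → ℝ, (∀ v, 0 ≤ w v) ∧ (∀ i, bval w (Q i) = 1) ∧ ∀ v, q * w v ≤ u v := by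
  classical
  have hpos i : 0 < bval u (Q i) := hq.trans_le (hle i)
  have hchoose {v i} (hv : v ∈ Q i) : (⟨i, hv⟩ : ∃ i, v ∈ Q i).choose = i := by
    by_contra hne
    exact Finset.disjoint_left.mp (hQ hne) (⟨i, hv⟩ : ∃ i, v ∈ Q i).choose_spec hv
  refine ⟨fun v => if h : ∃ i, v ∈ Q i then u v / bval u (Q h.choose) else 0,
    fun v => ?_, fun i => ?_, fun v => ?_⟩
  · dsimp only
    split_ifs
    exacts [div_nonneg (hu v) (hpos _).le, le_rfl]
  · have hw : ∀ v ∈ Q i, (if h : ∃ i, v ∈ Q i then u v / bval u (Q h.choose) else 0) =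
        u v / bval u (Q i) := fun v hv => by rw [dif_pos ⟨i, hv⟩, hchoose hv]
    rw [bval, Finset.sum_congr rfl hw, ← Finset.sum_div]
    exact div_self (hpos i).ne'
  · dsimp only
    split_ifs with h
    · rw [mul_div_assoc', div_le_iff₀ (hpos _), mul_comm]
      exact mul_le_mul_of_nonneg_left (hle _) (hu v)
    · simpa using hu v

def IsRegularUtility {V : Type*} [DecidableEq V] [Fintype V] (G : SimpleGraph V) (n : ℕ)
    (u : V → ℝ) : Prop :=
  mms G n u = 1 ∧ bval u Finset.univ = n

theorem exists_isRegularUtility_mul_le {V : Type*} [DecidableEq V] [Fintype V]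
    {G : SimpleGraph V} {n : ℕ} (hn : 0 < n) (hsplit : ∃ P, IsSplitOn G Finset.univ n P)
    {u : V → ℝ} (hu : ∀ v, 0 ≤ u v) (hmms : 0 < mms G n u) :
    ∃ w : V → ℝ, (∀ v, 0 ≤ w v) ∧ IsRegularUtility G n w ∧ ∀ v, mms G n u * w v ≤ u v := by
  obtain ⟨Q, hQ, hle⟩ := exists_isSplitOn_forall_mmsOn_le (u := u) hn hsplit
  obtain ⟨w, hw, hwQ, hwu⟩ :=
    exists_nonneg_forall_bval_eq_one_of_pairwise_disjoint (fun i j hij => hQ.2.1 i j hij) hu hmms hle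
  refine ⟨w, hw, ⟨mmsOn_eq_of_forall_bval_eq hn hQ hwQ, ?_⟩, hwu⟩
  simp [← hQ.sum_bval w, hwQ]

theorem mul_le_bval_of_forall_mul_le {V : Type*} [DecidableEq V] {u w : V → ℝ} {S : Finset V}
    {a c : ℝ} (hc : 0 ≤ c) (hu : ∀ v, 0 ≤ u v) (hwu : ∀ v, a * w v ≤ u v) (hcw : c ≤ bval w S) :
    c * a ≤ bval u S := by
  rcases le_or_gt a 0 with ha | ha
  · exact (mul_nonpos_of_nonneg_of_nonpos hc ha).trans (Finset.sum_nonneg fun v _ => hu v)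
  · calc c * a ≤ a * bval w S := by rw [mul_comm]; exact mul_le_mul_of_nonneg_left hcw ha.le
      _ = ∑ v ∈ S, a * w v := Finset.mul_sum _ _ _
      _ ≤ bval u S := Finset.sum_le_sum fun v _ => hwu v

/-- if `c`-sufficient allocations exist for every `n`-regular collection
of agents, then they exist for arbitrary nonnegative utility collections. -/
theorem stmt2 {V : Type*} [DecidableEq V] [Fintype V] (G : SimpleGraph V)
    (hG : G.Connected) (n : ℕ) (c : ℝ) (hc : 0 < c)
    (hreg : ∀ us : Fin n → V → ℝ, (∀ i v, 0 ≤ us i v) →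
      (∀ i, mms G n (us i) = 1 ∧ bval (us i) Finset.univ = (n : ℝ)) →
      ∃ P : Fin n → Finset V, IsSplitOn G Finset.univ n P ∧
        ∀ i, c * mms G n (us i) ≤ bval (us i) (P i)) :
    ∀ us : Fin n → V → ℝ, (∀ i v, 0 ≤ us i v) →
      ∃ P : Fin n → Finset V, IsSplitOn G Finset.univ n P ∧
        ∀ i, c * mms G n (us i) ≤ bval (us i) (P i) := by
  intro us hus
  rcases Nat.eq_zero_or_pos n with rfl | hn
  · obtain ⟨P, hP, -⟩ := hreg (fun _ _ => 0) (fun i => i.elim0) (fun i => i.elim0)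
    exact ⟨P, hP, fun i => i.elim0⟩
  have hsplit := hG.exists_isSplitOn_univ hn
  by_cases hpos : ∃ i, 0 < mms G n (us i)
  · obtain ⟨i₀, hi₀⟩ := hpos
    obtain ⟨w₀, hw₀, hw₀reg, -⟩ := exists_isRegularUtility_mul_le hn hsplit (hus i₀) hi₀
    -- an agent with `mms ≤ 0` is satisfied by any bundle, so any regular utility can stand in
    have hws i : ∃ w : V → ℝ, (∀ v, 0 ≤ w v) ∧ IsRegularUtility G n w ∧
        ∀ v, mms G n (us i) * w v ≤ us i v := by
      by_cases hi : 0 < mms G n (us i)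
      · exact exists_isRegularUtility_mul_le hn hsplit (hus i) hi
      · exact ⟨w₀, hw₀, hw₀reg, fun v =>
          (mul_nonpos_of_nonpos_of_nonneg (not_lt.mp hi) (hw₀ v)).trans (hus i v)⟩
    choose ws hws hwsreg hwsle using hws
    obtain ⟨P, hP, hPc⟩ := hreg ws hws hwsreg
    refine ⟨P, hP, fun i => mul_le_bval_of_forall_mul_le hc.le (hus i) (hwsle i) ?_⟩
    simpa [(hwsreg i).1] using hPc i
  · push Not at hpos
    obtain ⟨P, hP⟩ := hsplit
    exact ⟨P, hP, fun i => (mul_nonpos_of_nonneg_of_nonpos hc.le (hpos i)).trans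
      (Finset.sum_nonneg fun v _ => hus i v)⟩
end

section
/- Let C be a cycle with m vertices (goods) and let n agents have additive nonnegative utility functions u_1,...,u_n. If m < 2n, then there exists an allocation of the goods into n connected bundles such that agent i's bundle has value at least mms^(n)(C,u_i), for every i. (One may use as given that mms-allocations always exist on paths/trees.) -/
open scoped BigOperators

noncomputable section

/-!
Every agent's maximin share is attained by some split. Since `m < 2n`, the optimal split of
agent 0 has a bundle with at most one good, so some good `g` is worth at least that agent's
share; agent 0 gets `g`. Removing `g` leaves the path `g + 1, …, g + (m - 1)`. For every other
agent, the `n - 1` bundles of its optimal split that avoid `g` are disjoint subpaths worth at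
least its share, so it can cut the path into `n - 1` consecutive such pieces. A moving knife
then shares the path among these `n - 1` agents: whoever's first piece ends earliest takes it,
and everybody else can still cut the rest into one piece fewer.
-/

open Finset Function

section Cutting

variable {ι : Type*}

/-- `k` consecutive intervals of `[x, L)`, starting at `x`, each of `w`-value at least `t`; the
last one may end before `L`. -/
def CanCut (w : ℕ → ℝ) (t : ℝ) (L : ℕ) : ℕ → ℕ → Prop
  | 0, x => x ≤ L
  | k + 1, x => ∃ y, x ≤ y ∧ t ≤ ∑ z ∈ Ico x y, w z ∧ CanCut w t L k y

namespace CanCut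

variable {w : ℕ → ℝ} {t : ℝ} {L : ℕ}

lemma le_end : ∀ {k x}, CanCut w t L k x → x ≤ L
  | 0, _, h => h
  | _ + 1, _, ⟨_, hxy, _, h⟩ => hxy.trans h.le_end

lemma of_le (hw : ∀ z, 0 ≤ w z) :
    ∀ {k x y}, x ≤ y → CanCut w t L k y → CanCut w t L k x
  | 0, _, _, hxy, h => hxy.trans h
  | _ + 1, _, _, hxy, ⟨y', hyy', ht, h⟩ =>
    ⟨y', hxy.trans hyy',
      ht.trans (sum_le_sum_of_subset_of_nonneg (Ico_subset_Ico_left hxy) fun z _ _ => hw z), h⟩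

lemma of_nonpos (ht : t ≤ 0) {x : ℕ} (hx : x ≤ L) : ∀ k, CanCut w t L k x
  | 0 => hx
  | k + 1 => ⟨x, le_rfl, by simpa using ht, of_nonpos ht hx k⟩

lemma of_pairwiseDisjoint [DecidableEq ι] (hw : ∀ z, 0 ≤ w z) (ht : 0 < t) {s e : ι → ℕ}
    (J : Finset ι) {x : ℕ} (hxL : x ≤ L) (hJ : ∀ i ∈ J, x ≤ s i ∧ e i ≤ L)
    (hdisj : (J : Set ι).PairwiseDisjoint fun i => Ico (s i) (e i))
    (hval : ∀ i ∈ J, t ≤ ∑ z ∈ Ico (s i) (e i), w z) : CanCut w t L J.card x := by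
  induction J using Finset.strongInduction generalizing x with
  | H J ih =>
  obtain rfl | hne := J.eq_empty_or_nonempty
  · exact hxL
  obtain ⟨i₀, hi₀, hmin⟩ := J.exists_min_image s hne
  have hlt : ∀ i ∈ J, s i < e i := by
    intro i hi
    by_contra! hei
    have := hval i hi
    rw [Ico_eq_empty_of_le hei, sum_empty] at this
    linarith
  have hafter : ∀ i ∈ J.erase i₀, e i₀ ≤ s i := by
    intro i hi
    obtain ⟨hne, hi⟩ := mem_erase.1 hi
    by_contra! hsi
    exact disjoint_left.1 (hdisj hi hi₀ hne) (mem_Ico.2 ⟨le_rfl, hlt i hi⟩)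
      (mem_Ico.2 ⟨hmin i hi, hsi⟩)
  have hx := (hJ i₀ hi₀).1
  rw [← card_erase_add_one hi₀]
  refine ⟨e i₀, hx.trans (hlt i₀ hi₀).le, ?_, ?_⟩
  · exact (hval i₀ hi₀).trans
      (sum_le_sum_of_subset_of_nonneg (Ico_subset_Ico_left hx) fun z _ _ => hw z)
  · exact ih _ (erase_ssubset hi₀) (hJ i₀ hi₀).2
      (fun i hi => ⟨hafter i hi, (hJ i (mem_of_mem_erase hi)).2⟩)
      (hdisj.subset (by simp)) (fun i hi => hval i (mem_of_mem_erase hi))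

end CanCut

def IsIntervalPartition (T : Finset ι) (s e : ι → ℕ) (x L : ℕ) : Prop :=
  T.biUnion (fun j => Ico (s j) (e j)) = Ico x L ∧
    (T : Set ι).PairwiseDisjoint fun j => Ico (s j) (e j)

lemma IsIntervalPartition.subset {T : Finset ι} {s e : ι → ℕ} {x L : ℕ}
    (h : IsIntervalPartition T s e x L) {j : ι} (hj : j ∈ T) : Ico (s j) (e j) ⊆ Ico x L :=
  h.1 ▸ subset_biUnion_of_mem (fun j => Ico (s j) (e j)) hj

lemma IsIntervalPartition.insert_update [DecidableEq ι] {T : Finset ι} {s e : ι → ℕ}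
    {x y L : ℕ} {j : ι} (h : IsIntervalPartition T s e y L) (hj : j ∉ T) (hxy : x ≤ y)
    (hyL : y ≤ L) :
    IsIntervalPartition (insert j T) (update s j x) (update e j y) x L := by
  have hT : ∀ i ∈ T, update s j x i = s i ∧ update e j y i = e i := fun i hi =>
    have hij := ne_of_mem_of_not_mem hi hj
    ⟨update_of_ne hij _ _, update_of_ne hij _ _⟩
  obtain ⟨hcover, hdisj⟩ := h
  constructor
  · rw [biUnion_insert, update_self, update_self,
      biUnion_congr rfl fun i hi => by rw [(hT i hi).1, (hT i hi).2], hcover,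
      Ico_union_Ico_eq_Ico hxy hyL]
  · rw [coe_insert]
    refine Set.PairwiseDisjoint.insert ?_ ?_
    · intro i hi i' hi' hii'
      simp only [onFun, (hT i hi).1, (hT i hi).2, (hT i' hi').1, (hT i' hi').2]
      exact hdisj hi hi' hii'
    · intro i hi hji
      simp only [update_self, (hT i hi).1, (hT i hi).2]
      refine (Ico_disjoint_Ico_consecutive x y L).mono_right ?_
      exact hcover ▸ subset_biUnion_of_mem (fun j => Ico (s j) (e j)) hi

theorem exists_isIntervalPartition [DecidableEq ι] (w : ι → ℕ → ℝ) (hw : ∀ j z, 0 ≤ w j z)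
    (t : ι → ℝ) {L : ℕ} (T : Finset ι) {x : ℕ} (hT : T.Nonempty)
    (hcut : ∀ j ∈ T, CanCut (w j) (t j) L T.card x) :
    ∃ s e : ι → ℕ, IsIntervalPartition T s e x L ∧
      ∀ j ∈ T, t j ≤ ∑ z ∈ Ico (s j) (e j), w j z := by
  induction T using Finset.strongInduction generalizing x with
  | H T ih =>
  have hfirst : ∀ j ∈ T, ∃ y, x ≤ y ∧ t j ≤ ∑ z ∈ Ico x y, w j z ∧
      CanCut (w j) (t j) L (T.card - 1) y := by
    intro j hj
    have := hcut j hj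
    rwa [← Nat.sub_add_cancel hT.card_pos] at this
  choose! y hxy hy hrest using hfirst
  obtain ⟨j, hj, hmin⟩ := T.exists_min_image y hT
  have hcard : (T.erase j).card = T.card - 1 := card_erase_of_mem hj
  obtain ⟨y', hxy', hyL', hval, s, e, hpart, hvals⟩ : ∃ y', x ≤ y' ∧ y' ≤ L ∧
      t j ≤ ∑ z ∈ Ico x y', w j z ∧ ∃ s e : ι → ℕ, IsIntervalPartition (T.erase j) s e y' L ∧
        ∀ i ∈ T.erase j, t i ≤ ∑ z ∈ Ico (s i) (e i), w i z := by
    obtain hT' | hT' := (T.erase j).eq_empty_or_nonempty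
    · refine ⟨L, (hxy j hj).trans (hrest j hj).le_end, le_rfl, (hy j hj).trans ?_, 0, 0, ?_,
        ?_⟩
      · exact sum_le_sum_of_subset_of_nonneg (Ico_subset_Ico_right (hrest j hj).le_end)
          fun z _ _ => hw j z
      · simp [IsIntervalPartition, hT']
      · simp [hT']
    · refine ⟨y j, hxy j hj, (hrest j hj).le_end, hy j hj,
        ih _ (erase_ssubset hj) hT' fun i hi => ?_⟩
      rw [hcard]
      exact (hrest i (mem_of_mem_erase hi)).of_le (hw i) (hmin i (mem_of_mem_erase hi))
  refine ⟨update s j x, update e j y', ?_, fun i hi => ?_⟩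
  · rw [← insert_erase hj]
    exact hpart.insert_update (notMem_erase j T) hxy' hyL'
  · obtain rfl | hij := eq_or_ne i j
    · simpa using hval
    · rw [update_of_ne hij, update_of_ne hij]
      exact hvals i (mem_erase.2 ⟨hij, hi⟩)

end Cutting

section Cycle

variable {m : ℕ}

def arc (a : ZMod m) (x y : ℕ) : Finset (ZMod m) := (Ico x y).image fun z : ℕ => a + z

lemma mem_arc {a v : ZMod m} {x y : ℕ} : v ∈ arc a x y ↔ ∃ z ∈ Ico x y, a + z = v :=
  mem_image

lemma val_add_natCast_sub {z : ℕ} (hz : z < m) (a : ZMod m) : (a + z - a).val = z := by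
  rw [add_sub_cancel_left, ZMod.val_natCast_of_lt hz]

lemma add_val_sub [NeZero m] (a v : ZMod m) : a + ((v - a).val : ZMod m) = v := by
  rw [ZMod.natCast_zmod_val, add_sub_cancel]

lemma injOn_add_natCast [NeZero m] (a : ZMod m) :
    Set.InjOn (fun z : ℕ => a + (z : ZMod m)) (Set.Iio m) :=
  fun z hz z' hz' h => by
    rw [← val_add_natCast_sub hz a, ← val_add_natCast_sub hz' a]
    exact congrArg (fun v => (v - a).val) h

lemma val_add_one_sub [NeZero m] {a v : ZMod m} (h : v + 1 ≠ a) :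
    (v + 1 - a).val = (v - a).val + 1 := by
  have hv : v + 1 = a + (((v - a).val + 1 : ℕ) : ZMod m) := by
    push_cast
    rw [← add_assoc, add_val_sub]
  have hlt : (v - a).val + 1 < m := by
    by_contra hge
    apply h
    rw [hv, show (v - a).val + 1 = m by have := ZMod.val_lt (v - a); omega, ZMod.natCast_self,
      add_zero]
  rw [hv, val_add_natCast_sub hlt]

lemma cycleGraph_adj_add_one [Fact (1 < m)] (v : ZMod m) : (cycleGraph m).Adj v (v + 1) := by
  simp [cycleGraph]

lemma isBundle_arc [Fact (1 < m)] (a : ZMod m) (x y : ℕ) :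
    IsBundle (cycleGraph m) (arc a x y) := by
  rcases le_or_gt y x with hyx | hxy
  · left
    simp [arc, Ico_eq_empty_of_le hyx]
  right
  rw [SimpleGraph.connected_iff_exists_forall_reachable]
  refine ⟨⟨a + x, mem_arc.2 ⟨x, mem_Ico.2 ⟨le_rfl, hxy⟩, rfl⟩⟩, ?_⟩
  rintro ⟨_, hv⟩
  obtain ⟨z, hz, rfl⟩ := mem_arc.1 hv
  obtain ⟨hxz, hzy⟩ := mem_Ico.1 hz
  induction z, hxz using Nat.le_induction with
  | base => rfl
  | succ z hxz ih =>
    have hz : z ∈ Ico x y := mem_Ico.2 ⟨hxz, by omega⟩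
    refine (ih hz (mem_arc.2 ⟨z, hz, rfl⟩) (by omega)).trans (SimpleGraph.Adj.reachable ?_)
    simpa [add_assoc] using cycleGraph_adj_add_one (a + (z : ZMod m))

/-- A discrete intermediate value theorem: since `S` avoids `a`, an edge inside `S` changes the
coordinate `(· - a).val` by exactly one. -/
lemma exists_mem_val_sub_eq [NeZero m] {a : ZMod m} {S : Finset (ZMod m)}
    (hS : ((cycleGraph m).induce (S : Set (ZMod m))).Preconnected) (ha : a ∉ S)
    {u v : ZMod m} (hu : u ∈ S) (hv : v ∈ S) {z : ℕ} (huz : (u - a).val ≤ z)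
    (hzv : z ≤ (v - a).val) : ∃ w ∈ S, (w - a).val = z := by
  by_contra! hz
  obtain ⟨p⟩ := hS ⟨u, hu⟩ ⟨v, hv⟩
  obtain ⟨d, -, hfst, hsnd⟩ := p.exists_boundary_dart {w | (w.1 - a).val < z}
    (lt_of_le_of_ne huz (hz u hu)) (not_lt.2 hzv)
  simp only [Set.mem_ofPred_eq, not_lt] at hfst hsnd
  have hstep : ∀ w : ZMod m, w + 1 ∈ S → (w + 1 - a).val = (w - a).val + 1 :=
    fun w hw => val_add_one_sub (ne_of_mem_of_not_mem hw ha)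
  have hadj := d.adj
  simp only [SimpleGraph.induce_adj, cycleGraph, SimpleGraph.fromRel_adj] at hadj
  rcases hadj.2 with h | h
  · have := hstep _ (h ▸ d.snd.2)
    rw [h] at hsnd
    exact hz _ d.snd.2 (by rw [h]; omega)
  · have := hstep _ (h ▸ d.fst.2)
    rw [h] at hfst
    omega

lemma exists_eq_arc_of_isBundle [NeZero m] {a : ZMod m} {S : Finset (ZMod m)}
    (hS : IsBundle (cycleGraph m) S) (ha : a ∉ S) : ∃ x y, 1 ≤ x ∧ y ≤ m ∧ S = arc a x y := by
  rcases hS with hS | hS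
  · exact ⟨1, 1, le_rfl, NeZero.one_le, by simpa [arc] using hS⟩
  obtain ⟨⟨u₀, hu₀⟩⟩ := hS.nonempty
  obtain ⟨u, hu, hmin⟩ := S.exists_min_image (fun v => (v - a).val) ⟨u₀, hu₀⟩
  obtain ⟨v, hv, hmax⟩ := S.exists_max_image (fun v => (v - a).val) ⟨u₀, hu₀⟩
  refine ⟨(u - a).val, (v - a).val + 1, ?_, ZMod.val_lt _, ?_⟩
  · exact Nat.one_le_iff_ne_zero.2 fun h => ha (sub_eq_zero.1 ((ZMod.val_eq_zero _).1 h) ▸ hu)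
  ext w
  rw [mem_arc]
  constructor
  · intro hw
    exact ⟨(w - a).val, mem_Ico.2 ⟨hmin w hw, Nat.lt_succ_of_le (hmax w hw)⟩, add_val_sub a w⟩
  · rintro ⟨z, hz, rfl⟩
    obtain ⟨w, hw, rfl⟩ := exists_mem_val_sub_eq hS.preconnected ha hu hv (mem_Ico.1 hz).1
      (Nat.le_of_lt_succ (mem_Ico.1 hz).2)
    rwa [add_val_sub]

lemma arc_zero_eq_univ [NeZero m] (a : ZMod m) : arc a 0 m = univ :=
  eq_univ_iff_forall.2 fun v =>
    mem_arc.2 ⟨_, mem_Ico.2 ⟨Nat.zero_le _, ZMod.val_lt _⟩, add_val_sub a v⟩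

lemma bval_arc [NeZero m] (u : ZMod m → ℝ) (a : ZMod m) {x y : ℕ} (h : Ico x y ⊆ Ico 0 m) :
    bval u (arc a x y) = ∑ z ∈ Ico x y, u (a + z) :=
  sum_image fun _ hz _ hz' => injOn_add_natCast a (mem_Ico.1 (h hz)).2 (mem_Ico.1 (h hz')).2

lemma isSplitOn_arc [NeZero m] [Fact (1 < m)] {n : ℕ} (a : ZMod m) {s e : Fin n → ℕ}
    (h : IsIntervalPartition univ s e 0 m) :
    IsSplitOn (cycleGraph m) univ n fun j => arc a (s j) (e j) := by
  refine ⟨fun j => isBundle_arc a _ _, fun i j hij => ?_, fun _ => subset_univ _, fun v _ => ?_⟩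
  · rw [disjoint_left]
    rintro _ hv hv'
    obtain ⟨z, hz, rfl⟩ := mem_arc.1 hv
    obtain ⟨z', hz', hzz'⟩ := mem_arc.1 hv'
    obtain rfl := injOn_add_natCast a (mem_Ico.1 (h.subset (mem_univ j) hz')).2
      (mem_Ico.1 (h.subset (mem_univ i) hz)).2 hzz'
    exact disjoint_left.1 (h.2 (mem_coe.2 (mem_univ i)) (mem_coe.2 (mem_univ j)) hij) hz hz'
  · obtain ⟨j, -, hj⟩ := mem_biUnion.1 (h.1 ▸ mem_Ico.2 ⟨Nat.zero_le _, ZMod.val_lt (v - a)⟩)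
    exact ⟨j, mem_arc.2 ⟨_, hj, add_val_sub a v⟩⟩

lemma canCut_of_isSplitOn [NeZero m] {n : ℕ} {u : ZMod m → ℝ} (hu : ∀ v, 0 ≤ u v) {t : ℝ}
    {Q : Fin n → Finset (ZMod m)} (hQ : IsSplitOn (cycleGraph m) univ n Q)
    (hval : ∀ i, t ≤ bval u (Q i)) (a : ZMod m) :
    CanCut (fun z => u (a + z)) t m (n - 1) 1 := by
  rcases le_or_gt t 0 with ht | ht
  · exact CanCut.of_nonpos ht NeZero.one_le _
  obtain ⟨hbundle, hdisj, -, hcov⟩ := hQ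
  obtain ⟨r, hr⟩ := hcov a (mem_univ a)
  have harc : ∀ i ∈ univ.erase r, ∃ x y, 1 ≤ x ∧ y ≤ m ∧ Q i = arc a x y := fun i hi =>
    exists_eq_arc_of_isBundle (hbundle i) fun ha =>
      disjoint_left.1 (hdisj i r (ne_of_mem_erase hi)) ha hr
  choose! x y hx hy hQ using harc
  have hcard : (univ.erase r).card = n - 1 := by simp [card_erase_of_mem]
  rw [← hcard]
  refine CanCut.of_pairwiseDisjoint (fun z => hu _) ht _ NeZero.one_le
    (fun i hi => ⟨hx i hi, hy i hi⟩) (fun i hi j hj hij => ?_) (fun i hi => ?_)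
  · rw [onFun, disjoint_left]
    intro z hzi hzj
    exact disjoint_left.1 (hdisj i j hij) (hQ i hi ▸ mem_arc.2 ⟨z, hzi, rfl⟩)
      (hQ j hj ▸ mem_arc.2 ⟨z, hzj, rfl⟩)
  · rw [← bval_arc u a (Ico_subset_Ico (Nat.zero_le _) (hy i hi)), ← hQ i hi]
    exact hval i

end Cycle

section Split

variable {V : Type*} [DecidableEq V] {G : SimpleGraph V} {n : ℕ}

lemma IsBundle.exists_isSplitOn [NeZero n] {A : Finset V} (hA : IsBundle G A) :
    ∃ P, IsSplitOn G A n P := by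
  refine ⟨fun i => if i = 0 then A else ∅, fun i => ?_, fun i j hij => ?_, fun i => ?_,
    fun v hv => ⟨0, by simpa using hv⟩⟩
  · dsimp only
    split_ifs
    · exact hA
    · exact Or.inl coe_empty
  · by_cases hi : i = 0 <;> by_cases hj : j = 0 <;> simp_all
  · dsimp only
    split_ifs <;> simp

lemma exists_isSplitOn_mmsOn_le [Fintype V] [NeZero n] {A : Finset V} (hA : IsBundle G A)
    (u : V → ℝ) : ∃ P, IsSplitOn G A n P ∧ ∀ i, mmsOn G A n u ≤ bval u (P i) := by
  classical
  let minVal : (Fin n → Finset V) → ℝ := fun P => univ.inf' univ_nonempty fun i => bval u (P i)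
  obtain ⟨P, hP, hmax⟩ := (univ.filter (IsSplitOn G A n)).exists_max_image minVal
    (by obtain ⟨P, hP⟩ := hA.exists_isSplitOn (n := n); exact ⟨P, by simpa using hP⟩)
  rw [mem_filter] at hP
  refine ⟨P, hP.2, fun i => le_trans ?_ (inf'_le (fun i => bval u (P i)) (mem_univ i))⟩
  refine csSup_le ⟨minVal P, P, hP.2, fun j => inf'_le _ (mem_univ j)⟩ ?_
  rintro q ⟨Q, hQ, hq⟩
  exact (le_inf' _ _ fun j _ => hq j).trans (hmax Q (by simpa using hQ))

lemma IsSplitOn.exists_card_le_one {A : Finset V} {P : Fin n → Finset V}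
    (hP : IsSplitOn G A n P) (h : A.card < 2 * n) : ∃ i, (P i).card ≤ 1 := by
  by_contra! hcard
  have hsum : ∑ i, (P i).card ≤ A.card := by
    rw [← card_biUnion fun i _ j _ hij => hP.2.1 i j hij]
    exact card_le_card (biUnion_subset.2 fun i _ => hP.2.2.1 i)
  have : ∑ _i : Fin n, 2 ≤ ∑ i, (P i).card := sum_le_sum fun i _ => hcard i
  simp only [sum_const, card_univ, Fintype.card_fin, smul_eq_mul] at this
  omega

lemma exists_bval_le_of_card_le_one [Nonempty V] {u : V → ℝ} (hu : ∀ v, 0 ≤ u v) {S : Finset V}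
    (hS : S.card ≤ 1) : ∃ v, bval u S ≤ u v := by
  obtain ⟨v, hv⟩ := card_le_one_iff_subset_singleton.1 hS
  exact ⟨v, (sum_le_sum_of_subset_of_nonneg hv fun w _ _ => hu w).trans_eq (sum_singleton _ _)⟩

end Split

/-- if `m < 2n` then an mms-allocation of `m` goods on a cycle
to `n` agents exists. -/
theorem stmt5 (m n : ℕ) [NeZero m] (hm : 3 ≤ m) (hmn : m < 2 * n)
    (us : Fin n → ZMod m → ℝ) (hus : ∀ i v, 0 ≤ us i v) :
    ∃ P : Fin n → Finset (ZMod m), IsSplitOn (cycleGraph m) Finset.univ n P ∧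
      ∀ i, mms (cycleGraph m) n (us i) ≤ bval (us i) (P i) := by
  have : Fact (1 < m) := ⟨by omega⟩
  have : NeZero n := ⟨by omega⟩
  have hcycle : IsBundle (cycleGraph m) univ :=
    arc_zero_eq_univ (0 : ZMod m) ▸ isBundle_arc 0 0 m
  choose Q hQ hQval using fun i => exists_isSplitOn_mmsOn_le (n := n) hcycle (us i)
  obtain ⟨r, hr⟩ := (hQ 0).exists_card_le_one (by simpa using hmn)
  obtain ⟨g, hg⟩ := exists_bval_le_of_card_le_one (hus 0) hr
  have hcard : (univ.erase (0 : Fin n)).card = n - 1 := by simp [card_erase_of_mem]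
  obtain ⟨s, e, hpart, hval⟩ := exists_isIntervalPartition (fun j z => us j (g + z))
    (fun j _ => hus j _) (fun j => mms (cycleGraph m) n (us j)) (univ.erase 0) (x := 1)
    (card_pos.1 (by omega)) fun j _ => hcard ▸ canCut_of_isSplitOn (hus j) (hQ j) (hQval j) g
  have hall : IsIntervalPartition univ (update s 0 0) (update e 0 1) 0 m := by
    rw [← insert_erase (mem_univ 0)]
    exact hpart.insert_update (notMem_erase _ _) zero_le_one NeZero.one_le
  refine ⟨fun j => arc g (update s 0 0 j) (update e 0 1 j), isSplitOn_arc g hall, fun j => ?_⟩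
  rw [bval_arc _ _ (hall.subset (mem_univ j))]
  obtain rfl | hj := eq_or_ne j 0
  · simp only [update_self, Nat.Ico_zero_eq_range, sum_range_one, Nat.cast_zero, add_zero]
    exact (hQval 0 r).trans hg
  · rw [update_of_ne hj, update_of_ne hj]
    exact hval j (mem_erase.2 ⟨hj, mem_univ j⟩)
end
end

section
/- For every n > 3 there exist nonnegative integer utility functions on a cycle with 2n vertices for n agents (of two types) such that no allocation of the goods into n connected bundles gives every agent a bundle of value at least her maximin share. Specifically, with cycle vertices v_1,...,v_{2n} and utilities: agents 1,...,n-2 value v_{2j-1} at n+1-j and v_{2j} at j for j = 1,...,n; agents n-1, n value v_1 at n, v_{2j} at n+1-j and v_{2j+1} at j for j = 1,...,n-1; every agent's maximin share equals n+1 and no mms-allocation exists. -/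
open scoped BigOperators

lemma split_sum_univ {V : Type*} [DecidableEq V] [Fintype V] {G : SimpleGraph V} {n : ℕ}
    {P : Fin n → Finset V} (hP : IsSplitOn G Finset.univ n P) {M : Type*} [AddCommMonoid M]
    (f : V → M) : ∑ i, ∑ v ∈ P i, f v = ∑ v, f v := by
  obtain ⟨-, hdisj, -, hcov⟩ := hP
  have hbi : Finset.univ.biUnion P = Finset.univ := by
    apply Finset.eq_univ_iff_forall.mpr
    intro v
    obtain ⟨i, hi⟩ := hcov v (Finset.mem_univ v)
    exact Finset.mem_biUnion.mpr ⟨i, Finset.mem_univ i, hi⟩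
  have hpd : (↑(Finset.univ : Finset (Fin n)) : Set (Fin n)).PairwiseDisjoint P := by
    intro i _ j _ hij
    exact hdisj i j hij
  rw [← hbi]
  exact (Finset.sum_biUnion hpd).symm

lemma mms_eq_of_good_split {V : Type*} [DecidableEq V] [Fintype V] {G : SimpleGraph V} {n : ℕ}
    (hn : 0 < n) {u : V → ℝ} {c : ℝ} {Q : Fin n → Finset V}
    (hQ : IsSplitOn G Finset.univ n Q) (hv : ∀ i, bval u (Q i) = c) :
    mms G n u = c := by
  have htot : ∑ v, u v = (n : ℝ) * c := by
    rw [← split_sum_univ hQ u]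
    have : ∀ i : Fin n, ∑ v ∈ Q i, u v = c := fun i => hv i
    rw [Finset.sum_congr rfl (fun i _ => this i)]
    simp [mul_comm]
  have hub : ∀ q ∈ {q : ℝ | ∃ P : Fin n → Finset V,
      IsSplitOn G Finset.univ n P ∧ ∀ i, q ≤ bval u (P i)}, q ≤ c := by
    rintro q ⟨P, hP, hq⟩
    have hsum : (n : ℝ) * q ≤ (n : ℝ) * c := by
      calc (n : ℝ) * q = ∑ _i : Fin n, q := by simp [mul_comm]
        _ ≤ ∑ i, bval u (P i) := Finset.sum_le_sum (fun i _ => hq i)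
        _ = ∑ v, u v := split_sum_univ hP u
        _ = (n : ℝ) * c := htot
    have hnpos : (0:ℝ) < (n:ℝ) := by exact_mod_cast hn
    exact le_of_mul_le_mul_left hsum hnpos
  have hmem : c ∈ {q : ℝ | ∃ P : Fin n → Finset V,
      IsSplitOn G Finset.univ n P ∧ ∀ i, q ≤ bval u (P i)} := ⟨Q, hQ, fun i => (hv i).ge⟩
  unfold mms mmsOn
  exact le_antisymm (csSup_le ⟨c, hmem⟩ hub) (le_csSup ⟨c, hub⟩ hmem)

lemma pair_isBundle {m : ℕ} (t : ZMod m) (hne : t ≠ t + 1) :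
    IsBundle (cycleGraph m) ({t, t + 1} : Finset (ZMod m)) := by
  right
  have hadj : (cycleGraph m).Adj t (t + 1) := by
    rw [cycleGraph, SimpleGraph.fromRel_adj]
    exact ⟨hne, Or.inl rfl⟩
  have hmem : t ∈ (({t, t + 1} : Finset (ZMod m)) : Set (ZMod m)) := by simp
  haveI : Nonempty (({t, t + 1} : Finset (ZMod m)) : Set (ZMod m)) := ⟨⟨t, hmem⟩⟩
  refine ⟨?_⟩
  rintro ⟨a, ha⟩ ⟨b, hb⟩
  by_cases hab : a = b
  · subst hab
    exact SimpleGraph.Reachable.refl _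
  · have ha' := ha
    have hb' := hb
    simp only [Finset.coe_insert, Finset.coe_singleton, Set.mem_insert_iff,
      Set.mem_singleton_iff] at ha' hb'
    have hG : (cycleGraph m).Adj a b := by
      rcases ha' with h1 | h1 <;> rcases hb' with h2 | h2
      · exact absurd (h1.trans h2.symm) hab
      · rw [h1, h2]; exact hadj
      · rw [h1, h2]; exact hadj.symm
      · exact absurd (h1.trans h2.symm) hab
    exact SimpleGraph.Adj.reachable (hG : ((cycleGraph m).induce _).Adj ⟨a, ha⟩ ⟨b, hb⟩)

lemma bundle_card_two {m : ℕ} {S : Finset (ZMod m)} (hb : IsBundle (cycleGraph m) S)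
    (hc : S.card = 2) : ∃ t, S = {t, t + 1} := by
  obtain ⟨a, b, hab, rfl⟩ := Finset.card_eq_two.mp hc
  rcases hb with h | h
  · exfalso
    have : a ∈ (({a, b} : Finset (ZMod m)) : Set (ZMod m)) := by simp
    rw [h] at this
    exact this
  · have hadj : (cycleGraph m).Adj a b := by
      have hreach := h.preconnected ⟨a, by simp⟩ ⟨b, by simp⟩
      obtain ⟨w⟩ := hreach
      have key : ∀ (x y : (({a, b} : Finset (ZMod m)) : Set (ZMod m)))
          (_ : ((cycleGraph m).induce _).Walk x y), x ≠ y → (cycleGraph m).Adj a b := by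
        intro x y w
        induction w with
        | nil => intro h'; exact absurd rfl h'
        | @cons u v _ h p ih =>
          intro _
          have hG : (cycleGraph m).Adj u.val v.val := h
          have hu := u.2
          have hv := v.2
          simp only [Finset.coe_insert, Finset.coe_singleton, Set.mem_insert_iff,
            Set.mem_singleton_iff] at hu hv
          have hne' : u.val ≠ v.val := hG.ne
          rcases hu with h1 | h1 <;> rcases hv with h2 | h2
          · exact absurd (h1.trans h2.symm) hne'
          · rw [h1, h2] at hG; exact hG
          · rw [h1, h2] at hG; exact hG.symm
          · exact absurd (h1.trans h2.symm) hne'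
      exact key _ _ w (fun he => hab (congrArg Subtype.val he))
    rw [cycleGraph, SimpleGraph.fromRel_adj] at hadj
    rcases hadj.2 with h' | h'
    · exact ⟨a, by rw [← h']⟩
    · exact ⟨b, by rw [← h', Finset.pair_comm]⟩

set_option maxHeartbeats 1000000 in
theorem stmt6 (n : ℕ) (hn : 3 < n) [NeZero (2 * n)]
    (u1 u2 : ZMod (2 * n) → ℝ)
    (h1 : ∀ t : ZMod (2 * n), u1 t =
      if t.val % 2 = 0 then ((n - t.val / 2 : ℕ) : ℝ) else (((t.val + 1) / 2 : ℕ) : ℝ))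
    (h2 : ∀ t : ZMod (2 * n), u2 t =
      if t.val = 0 then (n : ℝ)
      else if t.val % 2 = 0 then ((t.val / 2 : ℕ) : ℝ)
      else ((n + 1 - (t.val + 1) / 2 : ℕ) : ℝ))
    (us : Fin n → ZMod (2 * n) → ℝ)
    (hus : ∀ i : Fin n, us i = if (i : ℕ) < n - 2 then u1 else u2) :
    (∀ i, mms (cycleGraph (2 * n)) n (us i) = (n : ℝ) + 1) ∧
    ¬ ∃ P : Fin n → Finset (ZMod (2 * n)),
        IsSplitOn (cycleGraph (2 * n)) Finset.univ n P ∧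
        ∀ i, mms (cycleGraph (2 * n)) n (us i) ≤ bval (us i) (P i) := by
  -- basic value facts about `ZMod (2*n)`
  have hvlt : ∀ s : ZMod (2*n), s.val < 2*n := fun s => ZMod.val_lt s
  have hv1 : (1 : ZMod (2*n)).val = 1 := by
    have h := ZMod.val_one_eq_one_mod (2*n)
    rw [h, Nat.mod_eq_of_lt (by omega)]
  have hvadd1 : ∀ s : ZMod (2*n), (s + 1).val = if s.val = 2*n-1 then 0 else s.val + 1 := by
    intro s
    rw [ZMod.val_add, hv1]
    by_cases h : s.val = 2*n-1
    · rw [if_pos h, h, show 2*n-1+1 = 2*n by omega, Nat.mod_self]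
    · rw [if_neg h, Nat.mod_eq_of_lt (by have := hvlt s; omega)]
  have hselfne : ∀ s : ZMod (2*n), s ≠ s + 1 := by
    intro s h
    have hv := congrArg ZMod.val h
    rw [hvadd1 s] at hv
    have := hvlt s
    split_ifs at hv <;> omega
  have hne2 : ∀ s : ZMod (2*n), s ≠ s + 1 + 1 := by
    intro s h
    have hv := congrArg ZMod.val h
    rw [hvadd1 (s+1), hvadd1 s] at hv
    have := hvlt s
    split_ifs at hv <;> omega
  have hcastval : ∀ s : ZMod (2*n), ((s.val : ℕ) : ZMod (2*n)) = s :=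
    fun s => ZMod.natCast_rightInverse s
  have hvcast : ∀ k : ℕ, k < 2*n → ((k : ZMod (2*n))).val = k := by
    intro k hk
    rw [ZMod.val_natCast, Nat.mod_eq_of_lt hk]
  have hbpair : ∀ (u : ZMod (2*n) → ℝ) (s : ZMod (2*n)),
      bval u {s, s+1} = u s + u (s+1) := by
    intro u s
    exact Finset.sum_pair (hselfne s)
  -- the four pair-value computations
  have hA1 : ∀ s : ZMod (2*n), s.val % 2 = 0 → bval u1 {s, s+1} = (n:ℝ) + 1 := by
    intro s hpar
    have hk := hvlt s
    have hne : ¬ (s.val = 2*n-1) := by omega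
    rw [hbpair u1 s, h1 s, h1 (s+1), hvadd1 s, if_neg hne, if_pos hpar,
      if_neg (show ¬ ((s.val+1) % 2 = 0) by omega), ← Nat.cast_add,
      show (n - s.val/2) + ((s.val+1+1)/2) = n + 1 by omega]
    push_cast; ring
  have hA2 : ∀ s : ZMod (2*n), s.val % 2 = 1 → s.val ≠ 2*n-1 → bval u1 {s, s+1} = (n:ℝ) := by
    intro s hpar hne
    have hk := hvlt s
    rw [hbpair u1 s, h1 s, h1 (s+1), hvadd1 s, if_neg hne,
      if_neg (show ¬ (s.val % 2 = 0) by omega),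
      if_pos (show (s.val+1) % 2 = 0 by omega), ← Nat.cast_add,
      show ((s.val+1)/2) + (n - (s.val+1)/2) = n by omega]
  have hB1 : ∀ s : ZMod (2*n), s.val % 2 = 1 → bval u2 {s, s+1} = (n:ℝ) + 1 := by
    intro s hpar
    have hk := hvlt s
    rw [hbpair u2 s, h2 s, h2 (s+1), hvadd1 s,
      if_neg (show ¬ (s.val = 0) by omega),
      if_neg (show ¬ (s.val % 2 = 0) by omega)]
    by_cases hc : s.val = 2*n-1
    · rw [if_pos hc, if_pos rfl, ← Nat.cast_add,
        show (n + 1 - (s.val+1)/2) + n = n + 1 by omega]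
      push_cast; ring
    · rw [if_neg hc, if_neg (show ¬ (s.val + 1 = 0) by omega),
        if_pos (show (s.val+1) % 2 = 0 by omega), ← Nat.cast_add,
        show (n + 1 - (s.val+1)/2) + ((s.val+1)/2) = n + 1 by omega]
      push_cast; ring
  have hB2 : ∀ s : ZMod (2*n), s.val % 2 = 0 → s.val ≠ 0 → bval u2 {s, s+1} = (n:ℝ) := by
    intro s hpar hne0
    have hk := hvlt s
    have hne : ¬ (s.val = 2*n-1) := by omega
    rw [hbpair u2 s, h2 s, h2 (s+1), hvadd1 s, if_neg hne,
      if_neg hne0, if_pos hpar,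
      if_neg (show ¬ (s.val + 1 = 0) by omega),
      if_neg (show ¬ ((s.val+1) % 2 = 0) by omega), ← Nat.cast_add,
      show (s.val/2) + (n + 1 - (s.val+1+1)/2) = n by omega]
  -- single-vertex bounds
  have hC1 : ∀ s : ZMod (2*n), u1 s ≤ (n:ℝ) := by
    intro s
    have hk := hvlt s
    rw [h1 s]
    split_ifs <;> exact Nat.cast_le.mpr (by omega)
  have hC2 : ∀ s : ZMod (2*n), u2 s ≤ (n:ℝ) := by
    intro s
    have hk := hvlt s
    rw [h2 s]
    split_ifs with hz hp
    · exact le_refl _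
    · exact Nat.cast_le.mpr (by omega)
    · exact Nat.cast_le.mpr (by omega)
  -- the two canonical pair splits
  have hpairB : ∀ t : ZMod (2*n), IsBundle (cycleGraph (2*n)) ({t, t+1} : Finset (ZMod (2*n))) :=
    fun t => pair_isBundle t (hselfne t)
  have hmemval : ∀ (t x : ZMod (2*n)), x ∈ ({t, t+1} : Finset (ZMod (2*n))) →
      x.val = t.val ∨ x.val = (t+1).val := by
    intro t x hx
    rcases Finset.mem_insert.mp hx with rfl | hx
    · exact Or.inl rfl
    · rw [Finset.mem_singleton] at hx
      exact Or.inr (by rw [hx])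
  -- split for u1 : pairs {2i, 2i+1}
  have hsplit1 : IsSplitOn (cycleGraph (2*n)) Finset.univ n
      (fun i : Fin n => {((2*i.val : ℕ) : ZMod (2*n)), ((2*i.val : ℕ) : ZMod (2*n)) + 1}) := by
    refine ⟨fun i => hpairB _, ?_, fun i => Finset.subset_univ _, ?_⟩
    · intro i j hij
      rw [Finset.disjoint_left]
      intro x hxi hxj
      have h1' := hmemval _ x hxi
      have h2' := hmemval _ x hxj
      have e1 : ((2*i.val : ℕ) : ZMod (2*n)).val = 2*i.val := hvcast _ (by have := i.2; omega)
      have e2 : ((2*j.val : ℕ) : ZMod (2*n)).val = 2*j.val := hvcast _ (by have := j.2; omega)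
      rw [hvadd1, e1] at h1'
      rw [hvadd1, e2] at h2'
      have hi2 := i.2
      have hj2 := j.2
      have hij' : i.val ≠ j.val := fun h => hij (Fin.ext h)
      rw [if_neg (by omega)] at h1'
      rw [if_neg (by omega)] at h2'
      omega
    · intro v _
      have hk := hvlt v
      refine ⟨⟨v.val / 2, by omega⟩, ?_⟩
      simp only [Finset.mem_insert, Finset.mem_singleton]
      rcases (show 2*(v.val/2) = v.val ∨ 2*(v.val/2) + 1 = v.val by omega) with h | h
      · left
        conv_lhs => rw [← hcastval v, ← h]
      · right
        have : ((2*(v.val/2) : ℕ) : ZMod (2*n)) + 1 = ((2*(v.val/2) + 1 : ℕ) : ZMod (2*n)) := by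
          push_cast; ring
        rw [this]
        conv_lhs => rw [← hcastval v, ← h]
  -- split for u2 : pairs {2i+1, 2i+2}
  have hsplit2 : IsSplitOn (cycleGraph (2*n)) Finset.univ n
      (fun i : Fin n => {((2*i.val + 1 : ℕ) : ZMod (2*n)), ((2*i.val + 1 : ℕ) : ZMod (2*n)) + 1}) := by
    refine ⟨fun i => hpairB _, ?_, fun i => Finset.subset_univ _, ?_⟩
    · intro i j hij
      rw [Finset.disjoint_left]
      intro x hxi hxj
      have h1' := hmemval _ x hxi
      have h2' := hmemval _ x hxj
      have e1 : ((2*i.val + 1 : ℕ) : ZMod (2*n)).val = 2*i.val + 1 := hvcast _ (by have := i.2; omega)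
      have e2 : ((2*j.val + 1 : ℕ) : ZMod (2*n)).val = 2*j.val + 1 := hvcast _ (by have := j.2; omega)
      rw [hvadd1, e1] at h1'
      rw [hvadd1, e2] at h2'
      have hi2 := i.2
      have hj2 := j.2
      have hij' : i.val ≠ j.val := fun h => hij (Fin.ext h)
      by_cases hci : i.val = n - 1
      · rw [if_pos (by omega)] at h1'
        by_cases hcj : j.val = n - 1
        · omega
        · rw [if_neg (by omega)] at h2'; omega
      · rw [if_neg (by omega)] at h1'
        by_cases hcj : j.val = n - 1
        · rw [if_pos (by omega)] at h2'; omega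
        · rw [if_neg (by omega)] at h2'; omega
    · intro v _
      have hk := hvlt v
      by_cases h0 : v.val = 0
      · refine ⟨⟨n - 1, by omega⟩, ?_⟩
        simp only [Finset.mem_insert, Finset.mem_singleton]
        right
        have : ((2*(n-1) + 1 : ℕ) : ZMod (2*n)) + 1 = ((2*(n-1) + 2 : ℕ) : ZMod (2*n)) := by
          push_cast; ring
        rw [this, show 2*(n-1) + 2 = 2*n by omega, ZMod.natCast_self (2*n),
          ← hcastval v, h0, Nat.cast_zero]
      · rcases (show (∃ j, j < n ∧ v.val = 2*j + 1) ∨ (∃ j, j < n ∧ v.val = 2*j + 2) by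
          rcases Nat.even_or_odd v.val with he | ho
          · right; obtain ⟨c, hc⟩ := he; exact ⟨c - 1, by omega⟩
          · left; obtain ⟨c, hc⟩ := ho; exact ⟨c, by omega⟩) with ⟨j, hjn, hj⟩ | ⟨j, hjn, hj⟩
        · refine ⟨⟨j, hjn⟩, ?_⟩
          simp only [Finset.mem_insert, Finset.mem_singleton]
          left
          conv_lhs => rw [← hcastval v, hj]
        · refine ⟨⟨j, hjn⟩, ?_⟩
          simp only [Finset.mem_insert, Finset.mem_singleton]
          right
          have : ((2*j + 1 : ℕ) : ZMod (2*n)) + 1 = ((2*j + 2 : ℕ) : ZMod (2*n)) := by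
            push_cast; ring
          rw [this]
          conv_lhs => rw [← hcastval v, hj]
  -- values of the splits
  have hval1 : ∀ i : Fin n, bval u1 {((2*i.val : ℕ) : ZMod (2*n)), ((2*i.val : ℕ) : ZMod (2*n)) + 1} = (n:ℝ) + 1 := by
    intro i
    apply hA1
    rw [hvcast _ (by have := i.2; omega)]
    omega
  have hval2 : ∀ i : Fin n, bval u2 {((2*i.val + 1 : ℕ) : ZMod (2*n)), ((2*i.val + 1 : ℕ) : ZMod (2*n)) + 1} = (n:ℝ) + 1 := by
    intro i
    apply hB1
    rw [hvcast _ (by have := i.2; omega)]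
    omega
  have hmms1 : mms (cycleGraph (2*n)) n u1 = (n:ℝ) + 1 :=
    mms_eq_of_good_split (by omega) hsplit1 hval1
  have hmms2 : mms (cycleGraph (2*n)) n u2 = (n:ℝ) + 1 :=
    mms_eq_of_good_split (by omega) hsplit2 hval2
  have hmmsall : ∀ i : Fin n, mms (cycleGraph (2 * n)) n (us i) = (n:ℝ) + 1 := by
    intro i
    rw [hus i]
    split_ifs
    · exact hmms1
    · exact hmms2
  refine ⟨hmmsall, ?_⟩
  rintro ⟨P, hsplit, hval⟩
  obtain ⟨hbund, hdisj, hsub, hcov⟩ := hsplit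
  have hge : ∀ i, (n:ℝ) + 1 ≤ bval (us i) (P i) := by
    intro i
    have h' := hval i
    rwa [hmmsall i] at h'
  have husle : ∀ (i : Fin n) (s : ZMod (2*n)), us i s ≤ (n:ℝ) := by
    intro i s
    rw [hus i]
    split_ifs
    · exact hC1 s
    · exact hC2 s
  -- every bundle has exactly two vertices
  have hcard2 : ∀ i, (P i).card = 2 := by
    have hge2 : ∀ i, 2 ≤ (P i).card := by
      intro i
      by_contra hlt
      push_neg at hlt
      rcases (show (P i).card = 0 ∨ (P i).card = 1 by omega) with h0 | hc1
      · rw [Finset.card_eq_zero] at h0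
        have hb : bval (us i) (P i) = 0 := by rw [h0]; simp [bval]
        have h' := hge i
        rw [hb] at h'
        have hpos : (0:ℝ) < (n:ℝ) + 1 := by positivity
        linarith
      · obtain ⟨a, ha⟩ := Finset.card_eq_one.mp hc1
        have hb : bval (us i) (P i) = us i a := by rw [ha]; simp [bval]
        have h' := hge i
        rw [hb] at h'
        have h'' := husle i a
        linarith
    have hsum : ∑ i, (P i).card = 2*n := by
      have h := split_sum_univ (G := cycleGraph (2*n)) ⟨hbund, hdisj, hsub, hcov⟩
        (fun _ : ZMod (2*n) => (1:ℕ))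
      simp only [Finset.sum_const, smul_eq_mul, mul_one, Finset.card_univ] at h
      rw [h, ZMod.card]
    have hzero : ∑ i : Fin n, ((P i).card - 2) = 0 := by
      have hsplitsum : ∑ i : Fin n, ((P i).card - 2) + ∑ _i : Fin n, 2 = ∑ i, (P i).card := by
        rw [← Finset.sum_add_distrib]
        apply Finset.sum_congr rfl
        intro j _
        have := hge2 j
        omega
      have h2n : ∑ _i : Fin n, (2:ℕ) = 2*n := by
        simp [Finset.sum_const, Finset.card_univ, mul_comm]
      omega
    intro i
    have h0 := Finset.sum_eq_zero_iff.mp hzero i (Finset.mem_univ i)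
    have := hge2 i
    omega
  -- every bundle is a pair of consecutive vertices
  have hpairs : ∀ i, ∃ s, P i = {s, s+1} := fun i => bundle_card_two (hbund i) (hcard2 i)
  choose t ht using hpairs
  -- alternating structure of the starting points
  have hEflip : ∀ s : ZMod (2*n), (∃ i, P i = {s, s+1}) ↔ ¬ (∃ j, P j = {s+1, s+1+1}) := by
    intro s
    constructor
    · rintro ⟨i, hi⟩ ⟨j, hj⟩
      have hij : i ≠ j := by
        rintro rfl
        rw [hi] at hj
        have hmem : s ∈ ({s+1, s+1+1} : Finset (ZMod (2*n))) := by rw [← hj]; simp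
        rcases Finset.mem_insert.mp hmem with h | h
        · exact hselfne s h
        · rw [Finset.mem_singleton] at h
          exact hne2 s h
      have hd := hdisj i j hij
      have hmi : s + 1 ∈ P i := by rw [hi]; simp
      have hmj : s + 1 ∈ P j := by rw [hj]; simp
      exact (Finset.disjoint_left.mp hd hmi) hmj
    · intro hno
      by_contra hEs
      obtain ⟨i, hi⟩ := hcov (s+1) (Finset.mem_univ _)
      rw [ht i] at hi
      rcases Finset.mem_insert.mp hi with h | h
      · exact hno ⟨i, by rw [ht i, ← h]⟩
      · rw [Finset.mem_singleton] at h
        have hts : s = t i := add_right_cancel h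
        exact hEs ⟨i, by rw [ht i, ← hts]⟩
  have hEper : ∀ k : ℕ, ((∃ i, P i = {((k:ℕ) : ZMod (2*n)), ((k:ℕ) : ZMod (2*n)) + 1}) ↔
      ((∃ i, P i = {(0 : ZMod (2*n)), 0 + 1}) ↔ k % 2 = 0)) := by
    intro k
    induction k with
    | zero => simp
    | succ k ih =>
      have hc : ((k+1 : ℕ) : ZMod (2*n)) = ((k : ℕ) : ZMod (2*n)) + 1 := by push_cast; ring
      have hf := hEflip ((k : ℕ) : ZMod (2*n))
      have hmod2 : ((k+1) % 2 = 0) ↔ ¬ (k % 2 = 0) := by omega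
      rw [hc, hmod2]
      have h' : (∃ i, P i = {((k:ℕ):ZMod (2*n)) + 1, ((k:ℕ):ZMod (2*n)) + 1 + 1}) ↔
          ¬ (∃ i, P i = {((k:ℕ):ZMod (2*n)), ((k:ℕ):ZMod (2*n)) + 1}) := iff_not_comm.mp hf
      rw [h', ih]
      by_cases h0 : ∃ i, P i = {(0 : ZMod (2*n)), 0 + 1}
      · have h0' : ∃ i, P i = {(0 : ZMod (2*n)), 1} := by simpa using h0
        simp [h0']
        all_goals omega
      · have h0' : ¬ ∃ i, P i = {(0 : ZMod (2*n)), 1} := by simpa using h0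
        simp [h0']
        all_goals omega
  have hEall : ∀ s : ZMod (2*n), (∃ i, P i = {s, s+1}) ↔
      ((∃ i, P i = {(0 : ZMod (2*n)), 0 + 1}) ↔ s.val % 2 = 0) := by
    intro s
    have h' := hEper s.val
    rwa [hcastval s] at h'
  by_cases hE0 : ∃ i, P i = {(0 : ZMod (2*n)), 0 + 1}
  · -- all starting points even: the two u2-agents both need the pair {0,1}
    have hkey : ∀ i : Fin n, ¬ ((i:ℕ) < n - 2) → t i = 0 := by
      intro i hi
      have hpar : (t i).val % 2 = 0 := ((hEall (t i)).mp ⟨i, ht i⟩).mp hE0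
      by_contra h0
      have h0' : (t i).val ≠ 0 := fun h =>
        h0 (by rw [← hcastval (t i), h, Nat.cast_zero])
      have hb := hge i
      rw [hus i, if_neg hi, ht i, hB2 (t i) hpar h0'] at hb
      linarith
    have e1 := hkey ⟨n-2, by omega⟩ (by show ¬ (n-2 < n-2); omega)
    have e2 := hkey ⟨n-1, by omega⟩ (by show ¬ (n-1 < n-2); omega)
    have hd := hdisj ⟨n-2, by omega⟩ ⟨n-1, by omega⟩
      (Fin.ne_of_val_ne (by show n-2 ≠ n-1; omega))
    rw [ht ⟨n-2, by omega⟩, ht ⟨n-1, by omega⟩, e1, e2] at hd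
    have hm : (0 : ZMod (2*n)) ∈ ({(0:ZMod (2*n)), 0+1} : Finset (ZMod (2*n))) := by simp
    exact (Finset.disjoint_left.mp hd hm) hm
  · -- all starting points odd: the two u1-agents both need the pair {2n-1,0}
    have hkey : ∀ i : Fin n, ((i:ℕ) < n - 2) → (t i).val = 2*n - 1 := by
      intro i hi
      have hpar : (t i).val % 2 = 1 := by
        have h' := (hEall (t i)).mp ⟨i, ht i⟩
        have hne' : ¬ ((t i).val % 2 = 0) := fun he => hE0 (h'.mpr he)
        omega
      by_contra hne'
      have hb := hge i
      rw [hus i, if_pos hi, ht i, hA2 (t i) hpar hne'] at hb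
      linarith
    have e1 := hkey ⟨0, by omega⟩ (by show 0 < n-2; omega)
    have e2 := hkey ⟨1, by omega⟩ (by show 1 < n-2; omega)
    have hteq : t ⟨0, by omega⟩ = t ⟨1, by omega⟩ := by
      rw [← hcastval (t ⟨0, by omega⟩), ← hcastval (t ⟨1, by omega⟩), e1, e2]
    have hd := hdisj ⟨0, by omega⟩ ⟨1, by omega⟩
      (Fin.ne_of_val_ne (by show (0:ℕ) ≠ 1; omega))
    rw [ht ⟨0, by omega⟩, ht ⟨1, by omega⟩, hteq] at hd
    have hm : t ⟨1, by omega⟩ ∈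
        ({t ⟨1, by omega⟩, t ⟨1, by omega⟩ + 1} : Finset (ZMod (2*n))) := by simp
    exact (Finset.disjoint_left.mp hd hm) hm
end

section
/- For every integer n ≥ 2, with d = ⌊φn⌋ where φ = (√5+1)/2: n/d ≥ (√5−1)/2 and n/(⌈n²/⌊φn⌋⌉ + n − 2) ≥ (√5−1)/2. Consequently min(n/d, n/(⌈n²/d⌉+n−2)) ≥ (√5−1)/2 for this choice of d. -/
open scoped BigOperators

/-- with `d = ⌊φn⌋`, both `n/d` and `n/(⌈n²/d⌉+n−2)` are at least
`ψ = (√5−1)/2`. -/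
theorem stmt9 (n : ℕ) (hn : 2 ≤ n) (d : ℤ)
    (hd : d = ⌊(Real.sqrt 5 + 1) / 2 * (n : ℝ)⌋) :
    (Real.sqrt 5 - 1) / 2 ≤ (n : ℝ) / (d : ℝ) ∧
    (Real.sqrt 5 - 1) / 2 ≤
      (n : ℝ) / (((⌈(n : ℝ) ^ 2 / (d : ℝ)⌉ : ℤ) : ℝ) + (n : ℝ) - 2) ∧
    (Real.sqrt 5 - 1) / 2 ≤
      min ((n : ℝ) / (d : ℝ))
          ((n : ℝ) / (((⌈(n : ℝ) ^ 2 / (d : ℝ)⌉ : ℤ) : ℝ) + (n : ℝ) - 2)) := by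

  have hs2 : (2:ℝ) < Real.sqrt 5 := by
    nlinarith [Real.sq_sqrt (by norm_num : (5:ℝ) ≥ 0), Real.sqrt_nonneg 5]
  have hsq : Real.sqrt 5 ^ 2 = 5 := Real.sq_sqrt (by norm_num)
  set s := Real.sqrt 5 with hsdef
  set φ : ℝ := (s + 1) / 2 with hφ
  set ψ : ℝ := (s - 1) / 2 with hψ
  have hφψ : φ * ψ = 1 := by rw [hφ, hψ]; nlinarith
  have hdiff : φ - ψ = 1 := by rw [hφ, hψ]; ring
  have hψpos : 0 < ψ := by rw [hψ]; linarith
  have hn2 : (2:ℝ) ≤ (n:ℝ) := by exact_mod_cast hn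
  have hdle : (d:ℝ) ≤ φ * n := by rw [hd]; exact Int.floor_le _
  have hdgt : φ * n - 1 < (d:ℝ) := by rw [hd]; exact Int.sub_one_lt_floor _
  have hφn : 2 < φ * n := by nlinarith
  have hdpos : (0:ℝ) < (d:ℝ) := by linarith
  have h1 : ψ ≤ (n:ℝ) / (d:ℝ) := by
    rw [le_div_iff₀ hdpos]; nlinarith
  set c : ℤ := ⌈(n : ℝ) ^ 2 / (d : ℝ)⌉ with hc
  have hxle : (n:ℝ)^2 / (d:ℝ) ≤ ψ * n + 1 := by
    rw [div_le_iff₀ hdpos]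
    have h := mul_pos (show (0:ℝ) < ψ * n + 1 by nlinarith)
      (show (0:ℝ) < (d:ℝ) - (φ * n - 1) by linarith)
    nlinarith [h, hφψ, hdiff]
  have hcle : (c:ℝ) < ψ * n + 2 := by
    have := Int.ceil_lt_add_one ((n:ℝ)^2 / (d:ℝ))
    rw [← hc] at this; linarith
  have hcpos : (1:ℝ) ≤ (c:ℝ) := by
    have : (0:ℤ) < c := Int.ceil_pos.mpr (by positivity)
    exact_mod_cast this
  have hden : (0:ℝ) < (c:ℝ) + n - 2 := by linarith
  have h2 : ψ ≤ (n:ℝ) / ((c:ℝ) + n - 2) := by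
    rw [le_div_iff₀ hden]; nlinarith
  exact ⟨h1, h2, le_min h1 h2⟩
end

section
/- Let C be a cycle of goods and N = {1,2,3} a regular set of three agents (each proportional with maximin share 1 and total utility 3). Let 0 < c ≤ 1. If for some agent i, two different bundles of an mms-split of C for agent i each have value at least c·mms(j) to some agent j ≠ i, then a c-sufficient allocation of the goods on C to the three agents exists. -/
open scoped BigOperators

/-!
The third agent `t ∉ {i, j}` values the three bundles of `P` at 3 in total, so some bundle `s`
is worth at least `1 = mms(t)` to her. One of the two bundles good for `j` differs from `s`;
give it to `j`, give `s` to `t`, and the remaining bundle to `i`, who values every bundle of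
her own mms-split at least `mms(i) ≥ c · mms(i)`.
-/

open Finset

namespace IsSplitOn

variable {V : Type*} [DecidableEq V] {G : SimpleGraph V} {A : Finset V} {n : ℕ}
  {P : Fin n → Finset V}

theorem comp_perm (hP : IsSplitOn G A n P) (σ : Equiv.Perm (Fin n)) :
    IsSplitOn G A n (P ∘ σ) := by
  obtain ⟨hbundle, hdisj, hsub, hcover⟩ := hP
  refine ⟨fun a => hbundle (σ a), fun a b hab => hdisj _ _ (σ.injective.ne hab),
    fun a => hsub (σ a), fun v hv => ?_⟩
  obtain ⟨b, hb⟩ := hcover v hv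
  exact ⟨σ.symm b, by simpa using hb⟩

theorem sum_bval_s11 (hP : IsSplitOn G A n P) (u : V → ℝ) :
    ∑ s, bval u (P s) = bval u A := by
  obtain ⟨-, hdisj, hsub, hcover⟩ := hP
  have hA : univ.biUnion P = A := by
    ext v
    simp only [mem_biUnion, mem_univ, true_and]
    exact ⟨fun ⟨s, hv⟩ => hsub s hv, fun hv => hcover v hv⟩
  rw [bval, ← hA, sum_biUnion fun a _ b _ hab => hdisj a b hab]
  rfl

theorem exists_bval_ge [NeZero n] (hP : IsSplitOn G A n P) (u : V → ℝ) :
    ∃ s, bval u A ≤ n * bval u (P s) := by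
  obtain ⟨s, -, hs⟩ := exists_le_of_sum_le (s := univ) (f := fun _ => bval u A)
    (g := fun s => n * bval u (P s)) univ_nonempty (by simp [← mul_sum, hP.sum_bval_s11 u])
  exact ⟨s, hs⟩

end IsSplitOn

theorem Equiv.Perm.exists_apply_eq_and_apply_eq {α : Type*} [DecidableEq α] {a b x y : α}
    (hab : a ≠ b) (hxy : x ≠ y) : ∃ σ : Equiv.Perm α, σ a = x ∧ σ b = y := by
  have hx : x ≠ swap a x b := by
    rw [Ne, ← (swap a x).injective.eq_iff, swap_apply_self, swap_apply_right]
    exact hab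
  refine ⟨swap (swap a x b) y * swap a x, ?_, ?_⟩
  · simp only [Perm.mul_apply, swap_apply_left]
    exact swap_apply_of_ne_of_ne hx hxy
  · simp only [Perm.mul_apply, swap_apply_left]

theorem Fin.three_exists_third (i j : Fin 3) (hij : i ≠ j) :
    ∃ t, t ≠ j ∧ ∀ a, a ≠ i → a ≠ j → a = t := by
  revert i j; decide

theorem stmt11_general (m : ℕ) [NeZero m] (c : ℝ) (hc1 : c ≤ 1)
    (us : Fin 3 → ZMod m → ℝ)
    (hreg : ∀ i, mms (cycleGraph m) 3 (us i) = 1 ∧ bval (us i) Finset.univ = 3)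
    (i j : Fin 3) (hij : j ≠ i)
    (P : Fin 3 → Finset (ZMod m))
    (hP : IsSplitOn (cycleGraph m) Finset.univ 3 P)
    (hPmms : ∀ k, mms (cycleGraph m) 3 (us i) ≤ bval (us i) (P k))
    (k l : Fin 3) (hkl : k ≠ l)
    (hk : c * mms (cycleGraph m) 3 (us j) ≤ bval (us j) (P k))
    (hl : c * mms (cycleGraph m) 3 (us j) ≤ bval (us j) (P l)) :
    ∃ Q : Fin 3 → Finset (ZMod m), IsSplitOn (cycleGraph m) Finset.univ 3 Q ∧
      ∀ a, c * mms (cycleGraph m) 3 (us a) ≤ bval (us a) (Q a) := by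
  obtain ⟨t, htj, hthird⟩ := Fin.three_exists_third i j hij.symm
  obtain ⟨s, hs⟩ := hP.exists_bval_ge (us t)
  obtain ⟨q, hqs, hq⟩ : ∃ q, q ≠ s ∧ c * mms (cycleGraph m) 3 (us j) ≤ bval (us j) (P q) := by
    by_cases hsk : s = k
    exacts [⟨l, hsk ▸ hkl.symm, hl⟩, ⟨k, Ne.symm hsk, hk⟩]
  obtain ⟨σ, hσt, hσj⟩ := Equiv.Perm.exists_apply_eq_and_apply_eq htj (Ne.symm hqs)
  refine ⟨P ∘ σ, hP.comp_perm σ, fun a => ?_⟩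
  rw [Function.comp_apply]
  by_cases hai : a = i
  · subst hai
    rw [(hreg a).1] at hPmms ⊢
    linarith [hPmms (σ a)]
  by_cases haj : a = j
  · rwa [haj, hσj]
  · rw [hthird a hai haj, hσt, (hreg t).1]
    rw [(hreg t).2, Nat.cast_ofNat] at hs
    linarith

/-- Lemma on two good bundles in one mms-split: for a regular set of
three agents, if two different bundles of agent `i`'s mms-split are each worth at
least `c·mms(j)` to another agent `j`, then a `c`-sufficient allocation exists. -/
theorem stmt11 (m : ℕ) [NeZero m] (hm : 3 ≤ m) (c : ℝ) (hc0 : 0 < c) (hc1 : c ≤ 1)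
    (us : Fin 3 → ZMod m → ℝ) (hus : ∀ i v, 0 ≤ us i v)
    (hreg : ∀ i, mms (cycleGraph m) 3 (us i) = 1 ∧ bval (us i) Finset.univ = 3)
    (i j : Fin 3) (hij : j ≠ i)
    (P : Fin 3 → Finset (ZMod m))
    (hP : IsSplitOn (cycleGraph m) Finset.univ 3 P)
    (hPmms : ∀ k, mms (cycleGraph m) 3 (us i) ≤ bval (us i) (P k))
    (k l : Fin 3) (hkl : k ≠ l)
    (hk : c * mms (cycleGraph m) 3 (us j) ≤ bval (us j) (P k))
    (hl : c * mms (cycleGraph m) 3 (us j) ≤ bval (us j) (P l)) :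
    ∃ Q : Fin 3 → Finset (ZMod m), IsSplitOn (cycleGraph m) Finset.univ 3 Q ∧
      ∀ a, c * mms (cycleGraph m) 3 (us a) ≤ bval (us a) (Q a) :=
  stmt11_general m c hc1 us hreg i j hij P hP hPmms k l hkl hk hl
end

section
/- Let X = X_1,...,X_n and Y = Y_1,...,Y_n be two splits of a cycle into nonempty arcs, enumerated clockwise from a common anchor. If for some i with 1 ≤ i < n, X_i is a jump (𝒳_i ⊆ 𝒴_i) and X_{i+1} is not a jump, then Y_{i+1} ⊆ X_{i+1} and Y_{i+1} is a jump (𝒴_{i+1} ⊆ 𝒳_{i+1}). -/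
open scoped BigOperators

/-- The clockwise prefix of length `j` of the cycle `ZMod m`, starting at the anchor
`a`: the vertices `a, a+1, …, a+(j-1)`. -/
noncomputable def Pref (m : ℕ) (a : ZMod m) (j : ℕ) : Finset (ZMod m) :=
  (Finset.range j).image (fun k : ℕ => a + (k : ZMod m))


lemma Pref_mono (m : ℕ) (a : ZMod m) {j j' : ℕ} (h : j ≤ j') :
    Pref m a j ⊆ Pref m a j' :=
  Finset.image_subset_image (Finset.range_subset_range.mpr h)

lemma card_Pref (m : ℕ) [NeZero m] (a : ZMod m) {j : ℕ} (hj : j ≤ m) :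
    (Pref m a j).card = j := by
  rw [Pref, Finset.card_image_of_injOn, Finset.card_range]
  intro k1 h1 k2 h2 h
  simp only [Finset.coe_range, Set.mem_Iio] at h1 h2
  have := add_left_cancel h
  have h1' : k1 < m := lt_of_lt_of_le h1 hj
  have h2' : k2 < m := lt_of_lt_of_le h2 hj
  have := congrArg ZMod.val this
  rwa [ZMod.val_natCast_of_lt h1', ZMod.val_natCast_of_lt h2'] at this

lemma Pref_subset_le (m : ℕ) [NeZero m] (a : ZMod m) {j j' : ℕ}
    (hj : j ≤ m) (hj' : j' ≤ m) (h : Pref m a j ⊆ Pref m a j') : j ≤ j' := by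
  have := Finset.card_le_card h
  rwa [card_Pref m a hj, card_Pref m a hj'] at this

lemma mem_Pref_iff (m : ℕ) [NeZero m] (a : ZMod m) {j k : ℕ}
    (hj : j ≤ m) (hk : k < m) : a + (k : ZMod m) ∈ Pref m a j ↔ k < j := by
  constructor
  · intro h
    rw [Pref, Finset.mem_image] at h
    obtain ⟨k', hk', hkk⟩ := h
    rw [Finset.mem_range] at hk'
    have := add_left_cancel hkk
    have := congrArg ZMod.val this
    rw [ZMod.val_natCast_of_lt (lt_of_lt_of_le hk' hj), ZMod.val_natCast_of_lt hk] at this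
    omega
  · intro h
    rw [Pref, Finset.mem_image]
    exact ⟨k, Finset.mem_range.mpr h, rfl⟩

lemma mono_of_strict {c : ℕ → ℕ} {n : ℕ} (hcmono : ∀ j < n, c j < c (j + 1))
    {j k : ℕ} (hjk : j ≤ k) (hk : k ≤ n) : c j ≤ c k := by
  induction k with
  | zero => exact le_of_eq (by rw [Nat.le_zero.mp hjk])
  | succ k ih =>
    rcases Nat.eq_or_lt_of_le hjk with h | h
    · exact le_of_eq (by rw [h])
    · exact le_trans (ih (Nat.lt_succ_iff.mp h) (by omega)) (le_of_lt (hcmono k (by omega)))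


/-- if `X_i` is a jump and `X_{i+1}` is not a jump (for `1 ≤ i < n`),
then `Y_{i+1} ⊆ X_{i+1}` and `Y_{i+1}` is a jump. -/
theorem stmt16 (m n : ℕ) [NeZero m] (hm : 3 ≤ m) (a : ZMod m)
    (c d : ℕ → ℕ)
    (hc0 : c 0 = 0) (hcn : c n = m) (hcmono : ∀ j < n, c j < c (j + 1))
    (hd0 : d 0 = 0) (hdn : d n = m) (hdmono : ∀ j < n, d j < d (j + 1))
    (X Y : ℕ → Finset (ZMod m))
    (hX : ∀ j, 1 ≤ j → j ≤ n → X j = Pref m a (c j) \ Pref m a (c (j - 1)))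
    (hY : ∀ j, 1 ≤ j → j ≤ n → Y j = Pref m a (d j) \ Pref m a (d (j - 1)))
    (i : ℕ) (hi1 : 1 ≤ i) (hin : i < n)
    (hjump : Pref m a (c i) ⊆ Pref m a (d i))
    (hnot : ¬ Pref m a (c (i + 1)) ⊆ Pref m a (d (i + 1))) :
    Y (i + 1) ⊆ X (i + 1) ∧ Pref m a (d (i + 1)) ⊆ Pref m a (c (i + 1)) := by
  have hi1n : i + 1 ≤ n := hin
  have hcm : ∀ j ≤ n, c j ≤ m := fun j hj => hcn ▸ mono_of_strict hcmono hj le_rfl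
  have hdm : ∀ j ≤ n, d j ≤ m := fun j hj => hdn ▸ mono_of_strict hdmono hj le_rfl
  have hci : c i ≤ m := hcm i (le_of_lt hin)
  have hdi : d i ≤ m := hdm i (le_of_lt hin)
  have hci1 : c (i + 1) ≤ m := hcm _ hi1n
  have hdi1 : d (i + 1) ≤ m := hdm _ hi1n
  have h1 : c i ≤ d i := Pref_subset_le m a hci hdi hjump
  have h2 : d (i + 1) < c (i + 1) := by
    by_contra h
    exact hnot (Pref_mono m a (by omega))
  have hsub : Pref m a (d (i + 1)) ⊆ Pref m a (c (i + 1)) := Pref_mono m a (le_of_lt h2)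
  refine ⟨?_, hsub⟩
  rw [hX (i + 1) (by omega) hi1n, hY (i + 1) (by omega) hi1n]
  simp only [Nat.add_sub_cancel]
  intro x hx
  rw [Finset.mem_sdiff] at hx ⊢
  obtain ⟨hx1, hx2⟩ := hx
  rw [Pref, Finset.mem_image] at hx1
  obtain ⟨k, hk, rfl⟩ := hx1
  rw [Finset.mem_range] at hk
  have hkm : k < m := lt_of_lt_of_le hk hdi1
  have hk2 : ¬ k < d i := fun h => hx2 ((mem_Pref_iff m a hdi hkm).mpr h)
  constructor
  · exact (mem_Pref_iff m a hci1 hkm).mpr (by omega)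
  · intro h
    have := (mem_Pref_iff m a hci hkm).mp h
    omega
end
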